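/- Let φ = a₁·e^{123} + a₂·(e^{126}−e^{135}+e^{234}) + a₃·(e^{156}−e^{246}+e^{345}) + a₄·(e^{147}+e^{257}+e^{367}) + a₅·e^{456} for real numbers a₁,…,a₅. Then (ι_{e₇}φ) ∧ (ι_{e₇}φ) ∧ φ = −6·a₄³ · e^{1234567}. In particular, if a₄ = 0 then φ is not definite. -/

import Mathlib

/-!
Only the `a₄`-terms of `φ` involve `e⁷`, so `ι_{e₇}φ = a₄ ω` with `ω = e^{14} + e^{25} + e^{36}`.
Expanding `ω ∧ ω ∧ φ` in the forms `e^{i₁} ∧ ⋯ ∧ e^{i₇}`, every term with a repeated index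
vanishes; the six survivors are `e^{ab} ∧ e^{cd} ∧ e^{ef7}` with `{ab, cd, ef} = {14, 25, 36}`,
each an odd permutation of `e^{1234567}`.
-/

open AlternatingMap
open Fin.NatCast

/-- `ℝ⁷`. -/
abbrev V7 : Type := Fin 7 → ℝ

/-- Wedge product of real-valued alternating forms on `V7`. -/
noncomputable def wedge {m n : ℕ} (φ : V7 [⋀^Fin m]→ₗ[ℝ] ℝ) (ψ : V7 [⋀^Fin n]→ₗ[ℝ] ℝ) :
    V7 [⋀^Fin (m + n)]→ₗ[ℝ] ℝ :=
  ((TensorProduct.lid ℝ ℝ).toLinearMap.compAlternatingMap (φ.domCoprod ψ)).domDomCongr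
    finSumFinEquiv

/-- The dual basis covector `eⁱ` (1-indexed: `i = 1, …, 7`) as a 1-form on `ℝ⁷`. -/
noncomputable def eF (i : ℕ) : V7 [⋀^Fin 1]→ₗ[ℝ] ℝ :=
  AlternatingMap.ofSubsingleton ℝ V7 ℝ (0 : Fin 1) (LinearMap.proj ((i - 1 : ℕ) : Fin 7))

/-- `e^{ij} := eⁱ ∧ eʲ` (1-indexed). -/
noncomputable def eW2 (i j : ℕ) : V7 [⋀^Fin 2]→ₗ[ℝ] ℝ := wedge (eF i) (eF j)

/-- `e^{ijk} := eⁱ ∧ eʲ ∧ eᵏ` (1-indexed). -/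
noncomputable def eW3 (i j k : ℕ) : V7 [⋀^Fin 3]→ₗ[ℝ] ℝ := wedge (wedge (eF i) (eF j)) (eF k)

/-- The volume form `e^{1234567} = e¹∧e²∧e³∧e⁴∧e⁵∧e⁶∧e⁷`. -/
noncomputable def vol7 : V7 [⋀^Fin 7]→ₗ[ℝ] ℝ :=
  wedge (wedge (wedge (wedge (wedge (wedge (eF 1) (eF 2)) (eF 3)) (eF 4)) (eF 5)) (eF 6)) (eF 7)

/-- The standard basis vector `eᵢ` of `ℝ⁷` (1-indexed: `i = 1, …, 7`). -/
noncomputable def bV (i : ℕ) : V7 := Pi.single ((i - 1 : ℕ) : Fin 7) 1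

/-- Interior product `ι_v φ` of a vector with a 3-form: `(x, y) ↦ φ (v, x, y)`. -/
noncomputable def iprod (v : V7) (φ : V7 [⋀^Fin 3]→ₗ[ℝ] ℝ) : V7 [⋀^Fin 2]→ₗ[ℝ] ℝ :=
  φ.curryLeft v

/-- The 7-form `(ι_v φ) ∧ (ι_v φ) ∧ φ`. -/
noncomputable def G2vol (v : V7) (φ : V7 [⋀^Fin 3]→ₗ[ℝ] ℝ) : V7 [⋀^Fin 7]→ₗ[ℝ] ℝ :=
  wedge (wedge (iprod v φ) (iprod v φ)) φ

/-- A 3-form on `ℝ⁷` is definite if `(ι_vφ)∧(ι_vφ)∧φ ≠ 0` for every nonzero `v`. -/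
def IsDefinite (φ : V7 [⋀^Fin 3]→ₗ[ℝ] ℝ) : Prop :=
  ∀ v : V7, v ≠ 0 → G2vol v φ ≠ 0

open Equiv Function

theorem MultilinearMap.alternatization_domDomCongr {R M N ι ι' : Type*} [CommRing R]
    [AddCommGroup M] [Module R M] [AddCommGroup N] [Module R N]
    [Fintype ι] [DecidableEq ι] [Fintype ι'] [DecidableEq ι']
    (e : ι ≃ ι') (f : MultilinearMap R (fun _ : ι => M) N) :
    (MultilinearMap.alternatization f).domDomCongr e
      = MultilinearMap.alternatization (f.domDomCongr e) := by
  ext v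
  rw [AlternatingMap.domDomCongr_apply, MultilinearMap.alternatization_apply,
    MultilinearMap.alternatization_apply]
  refine Fintype.sum_equiv e.permCongr _ _ fun σ => ?_
  rw [Perm.sign_permCongr]
  simp only [MultilinearMap.domDomCongr_apply]
  exact congrArg (fun x => Perm.sign σ • x)
    (congrArg f (funext fun i => by simp [permCongr_apply]))

section BasisForm

variable {n k : ℕ}

/-- `basisForm g = e^{g 0} ∧ ⋯ ∧ e^{g (k-1)}`, with 0-indexed coordinates (unlike `eF`). -/
noncomputable def basisForm (g : Fin k → Fin n) : (Fin n → ℝ) [⋀^Fin k]→ₗ[ℝ] ℝ :=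
  MultilinearMap.alternatization
    ((MultilinearMap.mkPiAlgebra ℝ (Fin k) ℝ).compLinearMap fun i => LinearMap.proj (g i))

theorem basisForm_apply (g : Fin k → Fin n) (v : Fin k → Fin n → ℝ) :
    basisForm g v = (Matrix.of fun p q => v p (g q)).det := by
  rw [basisForm, MultilinearMap.alternatization_apply, Matrix.det_apply']
  refine Finset.sum_congr rfl fun σ _ => ?_
  simp [Units.smul_def, zsmul_eq_mul]

theorem basisForm_eq_zero_of_not_injective {g : Fin k → Fin n} (hg : ¬ Injective g) :
    basisForm g = 0 := by
  simp only [Injective, not_forall] at hg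
  obtain ⟨i, j, hgij, hij⟩ := hg
  ext v
  rw [basisForm_apply]
  exact Matrix.det_zero_of_column_eq hij fun p => by simp [hgij]

theorem basisForm_comp_perm (g : Fin k → Fin n) (σ : Perm (Fin k)) :
    basisForm (g ∘ σ) = ((Perm.sign σ : ℤˣ) : ℝ) • basisForm g := by
  ext v
  rw [AlternatingMap.smul_apply, basisForm_apply, basisForm_apply, smul_eq_mul]
  exact Matrix.det_permute' σ (Matrix.of fun p q => v p (g q))

theorem basisForm_eq_neg_of_sign_eq_neg_one {g : Fin n → Fin n} (hg : Injective g)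
    (hsign : Perm.sign (Equiv.ofBijective g hg.bijective_of_finite) = -1) :
    basisForm g = -basisForm id := by
  have h := basisForm_comp_perm id (Equiv.ofBijective g hg.bijective_of_finite)
  rw [hsign, Units.val_neg, Units.val_one, Int.cast_neg, Int.cast_one] at h
  exact h.trans (by module)

end BasisForm

section Wedge

variable {m n : ℕ}

noncomputable def wedgeBilin (m n : ℕ) :
    (V7 [⋀^Fin m]→ₗ[ℝ] ℝ) →ₗ[ℝ] (V7 [⋀^Fin n]→ₗ[ℝ] ℝ) →ₗ[ℝ] V7 [⋀^Fin (m + n)]→ₗ[ℝ] ℝ :=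
  (TensorProduct.mk ℝ _ _).compr₂
    ((domDomCongrₗ ℝ finSumFinEquiv).toLinearMap ∘ₗ
      LinearMap.compAlternatingMapₗ ℝ (TensorProduct.lid ℝ ℝ).toLinearMap ∘ₗ domCoprod')

theorem wedge_add_left (φ₁ φ₂ : V7 [⋀^Fin m]→ₗ[ℝ] ℝ) (ψ : V7 [⋀^Fin n]→ₗ[ℝ] ℝ) :
    wedge (φ₁ + φ₂) ψ = wedge φ₁ ψ + wedge φ₂ ψ :=
  (wedgeBilin m n).map_add₂ φ₁ φ₂ ψ

theorem wedge_add_right (φ : V7 [⋀^Fin m]→ₗ[ℝ] ℝ) (ψ₁ ψ₂ : V7 [⋀^Fin n]→ₗ[ℝ] ℝ) :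
    wedge φ (ψ₁ + ψ₂) = wedge φ ψ₁ + wedge φ ψ₂ :=
  map_add (wedgeBilin m n φ) ψ₁ ψ₂

theorem wedge_sub_right (φ : V7 [⋀^Fin m]→ₗ[ℝ] ℝ) (ψ₁ ψ₂ : V7 [⋀^Fin n]→ₗ[ℝ] ℝ) :
    wedge φ (ψ₁ - ψ₂) = wedge φ ψ₁ - wedge φ ψ₂ :=
  map_sub (wedgeBilin m n φ) ψ₁ ψ₂

theorem wedge_smul_left (r : ℝ) (φ : V7 [⋀^Fin m]→ₗ[ℝ] ℝ) (ψ : V7 [⋀^Fin n]→ₗ[ℝ] ℝ) :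
    wedge (r • φ) ψ = r • wedge φ ψ :=
  (wedgeBilin m n).map_smul₂ r φ ψ

theorem wedge_smul_right (r : ℝ) (φ : V7 [⋀^Fin m]→ₗ[ℝ] ℝ) (ψ : V7 [⋀^Fin n]→ₗ[ℝ] ℝ) :
    wedge φ (r • ψ) = r • wedge φ ψ :=
  map_smul (wedgeBilin m n φ) r ψ

theorem wedge_zero_left (ψ : V7 [⋀^Fin n]→ₗ[ℝ] ℝ) : wedge (0 : V7 [⋀^Fin m]→ₗ[ℝ] ℝ) ψ = 0 :=
  (wedgeBilin m n).map_zero₂ ψ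

theorem wedge_basisForm (g : Fin m → Fin 7) (h : Fin n → Fin 7) :
    wedge (basisForm g) (basisForm h) = basisForm (Fin.append g h) := by
  rw [wedge, basisForm, basisForm, basisForm, ← MultilinearMap.domCoprod_alternization,
    ← LinearMap.compMultilinearMap_alternatization, MultilinearMap.alternatization_domDomCongr]
  congr 1
  refine MultilinearMap.ext fun v => ?_
  simp only [MultilinearMap.domDomCongr_apply, LinearMap.compMultilinearMap_apply,
    MultilinearMap.domCoprod_apply, MultilinearMap.compLinearMap_apply,
    MultilinearMap.mkPiAlgebra_apply, LinearMap.proj_apply, LinearEquiv.coe_coe,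
    TensorProduct.lid_tmul, smul_eq_mul, Fin.prod_univ_add, finSumFinEquiv_apply_left,
    finSumFinEquiv_apply_right, Fin.append_left, Fin.append_right]

end Wedge

theorem iprod_add (v : V7) (φ ψ : V7 [⋀^Fin 3]→ₗ[ℝ] ℝ) :
    iprod v (φ + ψ) = iprod v φ + iprod v ψ := rfl

theorem iprod_sub (v : V7) (φ ψ : V7 [⋀^Fin 3]→ₗ[ℝ] ℝ) :
    iprod v (φ - ψ) = iprod v φ - iprod v ψ := by
  ext w
  simp [iprod]

theorem iprod_smul (v : V7) (r : ℝ) (φ : V7 [⋀^Fin 3]→ₗ[ℝ] ℝ) :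
    iprod v (r • φ) = r • iprod v φ := rfl

theorem iprod_single_basisForm_of_forall_ne {g : Fin 3 → Fin 7} {j : Fin 7}
    (hj : ∀ q, g q ≠ j) : iprod (Pi.single j 1) (basisForm g) = 0 := by
  ext w
  rw [iprod, curryLeft_apply_apply, basisForm_apply]
  exact Matrix.det_eq_zero_of_row_eq_zero 0 fun q => by simp [Pi.single_apply, hj q]

theorem iprod_single_basisForm_of_last {x y j : Fin 7} (hx : x ≠ j) (hy : y ≠ j) :
    iprod (Pi.single j 1) (basisForm ![x, y, j]) = basisForm ![x, y] := by
  ext w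
  rw [iprod, curryLeft_apply_apply, basisForm_apply, basisForm_apply, Matrix.det_fin_three,
    Matrix.det_fin_two]
  simp [Pi.single_apply, hx, hy]

theorem eF_eq_basisForm (i : ℕ) : eF i = basisForm ![((i - 1 : ℕ) : Fin 7)] := by
  ext v
  simp [eF, basisForm_apply]

theorem eW3_eq_basisForm (i j k : ℕ) :
    eW3 i j k =
      basisForm ![((i - 1 : ℕ) : Fin 7), ((j - 1 : ℕ) : Fin 7), ((k - 1 : ℕ) : Fin 7)] := by
  rw [eW3, eF_eq_basisForm, eF_eq_basisForm, eF_eq_basisForm, wedge_basisForm, wedge_basisForm]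
  congr 1
  funext p
  fin_cases p <;> rfl

theorem vol7_eq_basisForm_id : vol7 = basisForm id := by
  simp only [vol7, eF_eq_basisForm, wedge_basisForm]
  congr 1
  funext p
  fin_cases p <;> rfl

noncomputable def phiForm (a₁ a₂ a₃ a₄ a₅ : ℝ) : V7 [⋀^Fin 3]→ₗ[ℝ] ℝ :=
  a₁ • eW3 1 2 3 + a₂ • (eW3 1 2 6 - eW3 1 3 5 + eW3 2 3 4)
    + a₃ • (eW3 1 5 6 - eW3 2 4 6 + eW3 3 4 5)
    + a₄ • (eW3 1 4 7 + eW3 2 5 7 + eW3 3 6 7) + a₅ • eW3 4 5 6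

noncomputable def omegaForm : V7 [⋀^Fin 2]→ₗ[ℝ] ℝ :=
  basisForm ![0, 3] + basisForm ![1, 4] + basisForm ![2, 5]

theorem phiForm_eq (a₁ a₂ a₃ a₄ a₅ : ℝ) :
    phiForm a₁ a₂ a₃ a₄ a₅ =
      a₁ • basisForm ![0, 1, 2] + a₂ • (basisForm ![0, 1, 5] - basisForm ![0, 2, 4]
        + basisForm ![1, 2, 3]) + a₃ • (basisForm ![0, 4, 5] - basisForm ![1, 3, 5]
        + basisForm ![2, 3, 4]) + a₄ • (basisForm ![0, 3, 6] + basisForm ![1, 4, 6]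
        + basisForm ![2, 5, 6]) + a₅ • basisForm ![3, 4, 5] := by
  simp only [phiForm, eW3_eq_basisForm]
  rfl

theorem iprod_phiForm (a₁ a₂ a₃ a₄ a₅ : ℝ) :
    iprod (bV 7) (phiForm a₁ a₂ a₃ a₄ a₅) = a₄ • omegaForm := by
  rw [phiForm_eq, show bV 7 = Pi.single 6 1 from rfl]
  simp (disch := decide) only [iprod_add, iprod_sub, iprod_smul,
    iprod_single_basisForm_of_forall_ne, iprod_single_basisForm_of_last]
  rw [omegaForm]
  module

theorem wedge_wedge_omegaForm_phiForm (a₁ a₂ a₃ a₄ a₅ : ℝ) :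
    wedge (wedge omegaForm omegaForm) (phiForm a₁ a₂ a₃ a₄ a₅) = (-(6 * a₄)) • vol7 := by
  rw [omegaForm, phiForm_eq, vol7_eq_basisForm_id]
  simp (disch := decide) only [wedge_add_left, wedge_add_right, wedge_sub_right, wedge_smul_right,
    wedge_basisForm, basisForm_eq_zero_of_not_injective, wedge_zero_left,
    basisForm_eq_neg_of_sign_eq_neg_one]
  module

theorem G2vol_bV_seven_phiForm (a₁ a₂ a₃ a₄ a₅ : ℝ) :
    G2vol (bV 7) (phiForm a₁ a₂ a₃ a₄ a₅) = (-(6 * a₄ ^ 3)) • vol7 := by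
  simp only [G2vol, iprod_phiForm, wedge_smul_left, wedge_smul_right,
    wedge_wedge_omegaForm_phiForm]
  module

theorem bV_ne_zero (i : ℕ) : bV i ≠ 0 :=
  Pi.single_ne_zero_iff.mpr one_ne_zero

/-- `(ι_{e₇}φ) ∧ (ι_{e₇}φ) ∧ φ = −6·a₄³ · e^{1234567}`; in particular if `a₄ = 0` then
`φ` is not definite. -/
theorem stmt13 (a₁ a₂ a₃ a₄ a₅ : ℝ) :
    let φ : V7 [⋀^Fin 3]→ₗ[ℝ] ℝ :=
      a₁ • eW3 1 2 3 + a₂ • (eW3 1 2 6 - eW3 1 3 5 + eW3 2 3 4)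
        + a₃ • (eW3 1 5 6 - eW3 2 4 6 + eW3 3 4 5)
        + a₄ • (eW3 1 4 7 + eW3 2 5 7 + eW3 3 6 7) + a₅ • eW3 4 5 6
    G2vol (bV 7) φ = (-(6 * a₄ ^ 3)) • vol7 ∧
    (a₄ = 0 → ¬ IsDefinite φ) := by
  have hG := G2vol_bV_seven_phiForm a₁ a₂ a₃ a₄ a₅
  refine ⟨hG, fun ha₄ hdef => hdef (bV 7) (bV_ne_zero 7) ?_⟩
  exact hG.trans (by simp [ha₄])
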